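/- arXiv:2003.03066 — 2 statements merged into one kernel-verified Lean document; each statement's English description precedes it below -/
import Mathlib

section
/- A finite set D of nonzero vectors in ℝⁿ with positive cosine measure κ(D) > 0 is a positive spanning set: every vector v ∈ ℝⁿ can be written as a nonnegative linear combination of elements of D. -/
/-!
Let `κ > 0` be the cosine measure of `D` and `C` the cone generated by `D`. For every `w` some
`d ∈ D` makes an angle with `w` of cosine at least `κ`, so subtracting the projection of `w` onto
`ℝ≥0 d` shrinks `‖w‖` by the factor `√(1 - κ²) < 1`. Iterating this greedy step approximates
every vector by elements of `C`, so the convex set `C` is dense, and a dense convex set in a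
finite-dimensional space is the whole space.
-/

open scoped RealInnerProductSpace

/-- Cosine measure of a nonempty finite set of vectors:
`κ(D) = inf over unit vectors v of max_{d ∈ D} ⟪v, d⟫ / ‖d‖`. -/
noncomputable def cosineMeasure {n : ℕ} (D : Finset (EuclideanSpace ℝ (Fin n)))
    (hD : D.Nonempty) : ℝ :=
  ⨅ v : Metric.sphere (0 : EuclideanSpace ℝ (Fin n)) 1,
    D.sup' hD fun d => ⟪(v : EuclideanSpace ℝ (Fin n)), d⟫ / ‖d‖

theorem Convex.eq_univ_of_dense {V : Type*} [NormedAddCommGroup V] [NormedSpace ℝ V]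
    [FiniteDimensional ℝ V] {s : Set V} (hs : Convex ℝ s) (hd : Dense s) : s = Set.univ := by
  have hspan : affineSpan ℝ s = ⊤ := by
    rw [← AffineSubspace.coe_eq_univ_iff, Set.eq_univ_iff_forall]
    exact fun x ↦ closure_minimal (subset_affineSpan ℝ s)
      (affineSpan ℝ s).closed_of_finiteDimensional (hd x)
  have hint := hs.interior_closure_eq_interior_of_nonempty_interior
    (hs.interior_nonempty_iff_affineSpan_eq_top.2 hspan)
  rw [hd.closure_eq, interior_univ] at hint
  exact Set.eq_univ_of_univ_subset (hint ▸ interior_subset)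

theorem AddSubmonoid.exists_mem_norm_sub_le_pow_mul {E : Type*} [SeminormedAddCommGroup E]
    (S : AddSubmonoid E) {r : ℝ} (h : ∀ w, ∃ c ∈ S, ‖w - c‖ ≤ r * ‖w‖) (hr : 0 ≤ r) (v : E)
    (k : ℕ) : ∃ c ∈ S, ‖v - c‖ ≤ r ^ k * ‖v‖ := by
  induction k with
  | zero => exact ⟨0, S.zero_mem, by simp⟩
  | succ k ih =>
    obtain ⟨c, hcS, hc⟩ := ih
    obtain ⟨c', hc'S, hc'⟩ := h (v - c)
    refine ⟨c + c', S.add_mem hcS hc'S, ?_⟩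
    calc ‖v - (c + c')‖ = ‖v - c - c'‖ := by rw [sub_add_eq_sub_sub]
      _ ≤ r * ‖v - c‖ := hc'
      _ ≤ r * (r ^ k * ‖v‖) := by gcongr
      _ = r ^ (k + 1) * ‖v‖ := by ring

theorem AddSubmonoid.dense_of_forall_exists_norm_sub_le {E : Type*} [SeminormedAddCommGroup E]
    (S : AddSubmonoid E) {r : ℝ} (hr₀ : 0 ≤ r) (hr₁ : r < 1)
    (h : ∀ w, ∃ c ∈ S, ‖w - c‖ ≤ r * ‖w‖) : Dense (S : Set E) := by
  intro v
  choose c hcS hc using S.exists_mem_norm_sub_le_pow_mul h hr₀ v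
  have hlim : Filter.Tendsto (fun k ↦ r ^ k * ‖v‖) Filter.atTop (nhds 0) := by
    simpa using (tendsto_pow_atTop_nhds_zero_of_lt_one hr₀ hr₁).mul_const ‖v‖
  refine mem_closure_of_tendsto (f := c) (b := Filter.atTop) ?_ (Filter.Eventually.of_forall hcS)
  rw [tendsto_iff_norm_sub_tendsto_zero]
  exact squeeze_zero (fun _ ↦ norm_nonneg _) (fun k ↦ norm_sub_rev (c k) v ▸ hc k) hlim

section InnerProductSpace

variable {E : Type*} [NormedAddCommGroup E] [InnerProductSpace ℝ E]

theorem norm_sub_inner_div_norm_sq_smul_sq (w d : E) :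
    ‖w - (⟪w, d⟫ / ‖d‖ ^ 2) • d‖ ^ 2 = ‖w‖ ^ 2 - (⟪w, d⟫ / ‖d‖) ^ 2 := by
  rcases eq_or_ne d 0 with rfl | hd
  · simp
  rw [norm_sub_sq_real, real_inner_smul_right, norm_smul, Real.norm_eq_abs, mul_pow, sq_abs]
  field_simp
  ring

theorem exists_nonneg_norm_sub_smul_le {κ : ℝ} (hκ : 0 ≤ κ) {w d : E}
    (h : κ * ‖w‖ ≤ ⟪w, d⟫ / ‖d‖) : ∃ t : ℝ, 0 ≤ t ∧ ‖w - t • d‖ ≤ √(1 - κ ^ 2) * ‖w‖ := by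
  have hcos : 0 ≤ ⟪w, d⟫ / ‖d‖ := le_trans (by positivity) h
  refine ⟨⟪w, d⟫ / ‖d‖ ^ 2, by rw [pow_two, ← div_div]; exact div_nonneg hcos (norm_nonneg d), ?_⟩
  have hsq : ‖w - (⟪w, d⟫ / ‖d‖ ^ 2) • d‖ ^ 2 ≤ (1 - κ ^ 2) * ‖w‖ ^ 2 := by
    rw [norm_sub_inner_div_norm_sq_smul_sq]
    nlinarith [mul_nonneg hκ (norm_nonneg w)]
  calc ‖w - (⟪w, d⟫ / ‖d‖ ^ 2) • d‖ = √(‖w - (⟪w, d⟫ / ‖d‖ ^ 2) • d‖ ^ 2) :=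
        (Real.sqrt_sq (norm_nonneg _)).symm
    _ ≤ √((1 - κ ^ 2) * ‖w‖ ^ 2) := Real.sqrt_le_sqrt hsq
    _ = √(1 - κ ^ 2) * ‖w‖ := by rw [Real.sqrt_mul' _ (sq_nonneg _), Real.sqrt_sq (norm_nonneg _)]

end InnerProductSpace

section CosineMeasure

variable {n : ℕ} (D : Finset (EuclideanSpace ℝ (Fin n))) (hD : D.Nonempty)

theorem cosineMeasure_le_sup' (v : Metric.sphere (0 : EuclideanSpace ℝ (Fin n)) 1) :
    cosineMeasure D hD ≤ D.sup' hD fun d ↦ ⟪(v : EuclideanSpace ℝ (Fin n)), d⟫ / ‖d‖ := by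
  refine ciInf_le ⟨-1, ?_⟩ v
  rintro _ ⟨u, rfl⟩
  obtain ⟨d, hd⟩ := hD
  have hcos := abs_le.1 (abs_real_inner_div_norm_mul_norm_le_one (u : EuclideanSpace ℝ (Fin n)) d)
  rw [mem_sphere_zero_iff_norm.1 u.2, one_mul] at hcos
  exact Finset.le_sup'_of_le _ hd hcos.1

theorem exists_mem_cosineMeasure_mul_norm_le (w : EuclideanSpace ℝ (Fin n)) :
    ∃ d ∈ D, cosineMeasure D hD * ‖w‖ ≤ ⟪w, d⟫ / ‖d‖ := by
  rcases eq_or_ne w 0 with rfl | hw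
  · obtain ⟨d, hd⟩ := hD
    exact ⟨d, hd, by simp⟩
  have hwpos : 0 < ‖w‖ := norm_pos_iff.2 hw
  have hu : ‖w‖⁻¹ • w ∈ Metric.sphere (0 : EuclideanSpace ℝ (Fin n)) 1 :=
    mem_sphere_zero_iff_norm.2 (norm_smul_inv_norm hw)
  obtain ⟨d, hd, hmax⟩ := Finset.exists_mem_eq_sup' hD fun d ↦ ⟪‖w‖⁻¹ • w, d⟫ / ‖d‖
  refine ⟨d, hd, ?_⟩
  have hle := cosineMeasure_le_sup' D hD ⟨_, hu⟩
  rw [hmax, real_inner_smul_left, mul_div_assoc, le_inv_mul_iff₀ hwpos] at hle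
  linarith

end CosineMeasure

theorem stmt_10_general {n : ℕ} (D : Finset (EuclideanSpace ℝ (Fin n)))
    (hD : D.Nonempty)
    (hκ : 0 < cosineMeasure D hD) :
    ∀ v : EuclideanSpace ℝ (Fin n), ∃ c : EuclideanSpace ℝ (Fin n) → ℝ,
      (∀ d ∈ D, 0 ≤ c d) ∧ v = ∑ d ∈ D, c d • d := by
  set C := PointedCone.hull ℝ (D : Set (EuclideanSpace ℝ (Fin n)))
  have hdense : Dense (C : Set (EuclideanSpace ℝ (Fin n))) := by
    refine C.toAddSubmonoid.dense_of_forall_exists_norm_sub_le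
      (Real.sqrt_nonneg (1 - cosineMeasure D hD ^ 2)) ?_ fun w ↦ ?_
    · rw [Real.sqrt_lt' one_pos]
      linarith [pow_pos hκ 2]
    · obtain ⟨d, hd, hwd⟩ := exists_mem_cosineMeasure_mul_norm_le D hD w
      obtain ⟨t, ht, hle⟩ := exists_nonneg_norm_sub_smul_le hκ.le hwd
      exact ⟨t • d, C.smul_mem ht (PointedCone.subset_hull hd), hle⟩
  intro v
  have hv : v ∈ C := Set.eq_univ_iff_forall.1 (C.convex.eq_univ_of_dense hdense) v
  obtain ⟨f, -, hf⟩ := Submodule.mem_span_finset.1 hv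
  exact ⟨fun d ↦ f d, fun d _ ↦ (f d).2, by simp [← hf]⟩

theorem stmt_10 {n : ℕ} (D : Finset (EuclideanSpace ℝ (Fin n)))
    (hD : D.Nonempty) (hD0 : ∀ d ∈ D, d ≠ 0)
    (hκ : 0 < cosineMeasure D hD) :
    ∀ v : EuclideanSpace ℝ (Fin n), ∃ c : EuclideanSpace ℝ (Fin n) → ℝ,
      (∀ d ∈ D, 0 ≤ c d) ∧ v = ∑ d ∈ D, c d • d :=
  stmt_10_general D hD hκ
end

section
/- Let γ > 2, p > 1, c > 0, ε_f > 0, ν ∈ (0,1) with ν/(1-ν) ≥ 2(τ^{-p}-1)/(γ-2), τ ∈ (0,1), and f_min ≤ f. Consider Φ = (ν/(cε_f))(f(x) - f_min) + (1-ν)δ^p and Φ' = (ν/(cε_f))(f(x') - f_min) + (1-ν)(δ')^p. If f(x') - f(x) ≤ -(γ-2)cε_f δ^p and (δ')^p ≤ τ^{-p} δ^p, then Φ' - Φ ≤ -(1/2) ν (γ-2) δ^p. -/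
/-!
Of the true decrease `(γ - 2) c ε_f δ^p` of `f`, scaled by `ν / (c ε_f)`, at most one half is
consumed by the growth `(1 - ν) (τ^{-p} - 1) δ^p` of the step-size term; bounding the latter by
`ν (γ - 2) δ^p / 2` is exactly the condition on `ν`.
-/

/-- `κ` stands for `c ε_f` and `Δ` for `δ ^ p`. -/
noncomputable def lyapunov (ν κ fmin f Δ : ℝ) : ℝ := ν / κ * (f - fmin) + (1 - ν) * Δ

lemma lyapunov_sub_lyapunov (ν κ fmin f f' Δ Δ' : ℝ) :
    lyapunov ν κ fmin f' Δ' - lyapunov ν κ fmin f Δ = ν / κ * (f' - f) + (1 - ν) * (Δ' - Δ) := by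
  unfold lyapunov
  ring

lemma div_mul_sub_le_of_sub_le {ν κ γ f f' Δ : ℝ} (hκ : 0 < κ) (hν : 0 ≤ ν)
    (hdec : f' - f ≤ -(γ - 2) * κ * Δ) : ν / κ * (f' - f) ≤ -(γ - 2) * ν * Δ :=
  calc ν / κ * (f' - f) ≤ ν / κ * (-(γ - 2) * κ * Δ) := by gcongr
    _ = -(γ - 2) * ν * Δ := by field_simp

lemma one_sub_mul_sub_one_le {ν γ T : ℝ} (hγ : 2 < γ) (hν : ν < 1)
    (h : 2 * (T - 1) / (γ - 2) ≤ ν / (1 - ν)) : (1 - ν) * (T - 1) ≤ ν * (γ - 2) / 2 := by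
  rw [div_le_div_iff₀ (by linarith) (by linarith)] at h
  linarith

lemma lyapunov_sub_le {ν κ γ T fmin f f' Δ Δ' : ℝ} (hγ : 2 < γ) (hκ : 0 < κ) (hν0 : 0 ≤ ν)
    (hν1 : ν < 1) (hν : 2 * (T - 1) / (γ - 2) ≤ ν / (1 - ν)) (hΔ : 0 ≤ Δ)
    (hdec : f' - f ≤ -(γ - 2) * κ * Δ) (hstep : Δ' ≤ T * Δ) :
    lyapunov ν κ fmin f' Δ' - lyapunov ν κ fmin f Δ ≤ -(1 / 2) * ν * (γ - 2) * Δ := by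
  have hf := div_mul_sub_le_of_sub_le (ν := ν) hκ hν0 hdec
  have hΔ' : (1 - ν) * (Δ' - Δ) ≤ (1 - ν) * (T - 1) * Δ := by
    rw [mul_assoc, sub_one_mul]
    gcongr
  have hgrowth : (1 - ν) * (T - 1) * Δ ≤ ν * (γ - 2) / 2 * Δ := by
    gcongr
    exact one_sub_mul_sub_one_le hγ hν1 hν
  rw [lyapunov_sub_lyapunov]
  linarith

theorem stmt_17_general (γ p c εf ν τ : ℝ) (hγ : 2 < γ) (hc : 0 < c)
    (hεf : 0 < εf) (hν0 : 0 < ν) (hν1 : ν < 1)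
    (hν : ν / (1 - ν) ≥ 2 * (τ ^ (-p) - 1) / (γ - 2))
    (fmin fx fx' δ δ' : ℝ) (hδ : 0 < δ)
    (hdec : fx' - fx ≤ -(γ - 2) * c * εf * δ ^ p)
    (hstep : δ' ^ p ≤ τ ^ (-p) * δ ^ p) :
    (ν / (c * εf) * (fx' - fmin) + (1 - ν) * δ' ^ p) -
      (ν / (c * εf) * (fx - fmin) + (1 - ν) * δ ^ p) ≤
      -(1 / 2) * ν * (γ - 2) * δ ^ p := by
  exact lyapunov_sub_le (fmin := fmin) hγ (mul_pos hc hεf) hν0.le hν1 hν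
    (Real.rpow_nonneg hδ.le p) (by linarith) hstep

theorem stmt_17 (γ p c εf ν τ : ℝ) (hγ : 2 < γ) (hp : 1 < p) (hc : 0 < c)
    (hεf : 0 < εf) (hν0 : 0 < ν) (hν1 : ν < 1)
    (hν : ν / (1 - ν) ≥ 2 * (τ ^ (-p) - 1) / (γ - 2))
    (hτ0 : 0 < τ) (hτ1 : τ < 1)
    (fmin fx fx' δ δ' : ℝ) (hδ : 0 < δ) (hδ' : 0 ≤ δ')
    (hfmin : fmin ≤ fx) (hfmin' : fmin ≤ fx')
    (hdec : fx' - fx ≤ -(γ - 2) * c * εf * δ ^ p)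
    (hstep : δ' ^ p ≤ τ ^ (-p) * δ ^ p) :
    (ν / (c * εf) * (fx' - fmin) + (1 - ν) * δ' ^ p) -
      (ν / (c * εf) * (fx - fmin) + (1 - ν) * δ ^ p) ≤
      -(1 / 2) * ν * (γ - 2) * δ ^ p :=
  stmt_17_general γ p c εf ν τ hγ hc hεf hν0 hν1 hν fmin fx fx' δ δ' hδ hdec hstep
end
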